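/- arXiv:1906.12239 — 3 statements merged into one kernel-verified Lean document; each statement's English description precedes it below -/
import Mathlib

section
/- The M-equivalence relation on traces, defined by t1 ≡_M t2 iff last(t1) = last(t2) and M(t1·v) = M(t2·v) for all continuation sequences v, has finite index when M is the semantics of a (finite-state) deterministic labelled MDP. -/
open scoped ENNReal Classical
open MeasureTheory

/-- Traces: alternating output-input sequences starting and ending with an output. -/
abbrev Trace (I O : Type*) := O × List (I × O)
/-- Test sequences: alternating output-input sequences starting with an output, ending with an input. -/
abbrev TS (I O : Type*) := List (O × I)
/-- Continuation sequences: start and end with an input. -/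
abbrev CS (I O : Type*) := I × List (O × I)

/-- Deterministic labelled Markov decision process. -/
structure DetMDP (Q I O : Type*) where
  q0 : Q
  trans : Q → I → Q → ℝ≥0∞
  lab : Q → O
  sum_one : ∀ q i, ∑' q', trans q i q' = 1
  det : ∀ q i q' q'', 0 < trans q i q' → 0 < trans q i q'' → lab q' = lab q'' → q' = q''

namespace DetMDP

variable {Q I O : Type*}

/-- Δ: unique successor with positive probability and matching label, if any. -/
noncomputable def step (M : DetMDP Q I O) (q : Q) (i : I) (o : O) : Option Q :=
  if h : ∃ q', 0 < M.trans q i q' ∧ M.lab q' = o then some h.choose else none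

noncomputable def run (M : DetMDP Q I O) : Option Q → List (I × O) → Option Q
  | oq, [] => oq
  | some q, (i, o) :: rest => M.run (M.step q i o) rest
  | none, _ :: _ => none

/-- δ*: the state reached by a trace, `none` if the trace is not observable. -/
noncomputable def dstar (M : DetMDP Q I O) (t : Trace I O) : Option Q :=
  if M.lab M.q0 = t.1 then M.run (some M.q0) t.2 else none

/-- Distribution over outputs after executing input `i` in state `q`. -/
noncomputable def outDist (M : DetMDP Q I O) (q : Q) (i : I) : O → ℝ≥0∞ :=
  fun o => ∑' q', if M.lab q' = o then M.trans q i q' else 0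

end DetMDP

/-- Split a nonempty test sequence into its trace part and final input. -/
def tsSplit {I O : Type*} : O → I → TS I O → Trace I O × I
  | o, i, [] => ((o, []), i)
  | o, i, (o', i') :: rest =>
    let p := tsSplit o' i' rest
    ((o, (i, p.1.1) :: p.1.2), p.2)

namespace DetMDP

variable {Q I O : Type*}

/-- The semantics of a deterministic labelled MDP: a partial map from test
sequences to output distributions. -/
noncomputable def sem (M : DetMDP Q I O) : TS I O → Option (O → ℝ≥0∞)
  | [] => some (fun o => if M.lab M.q0 = o then 1 else 0)
  | (o, i) :: rest =>
    let p := tsSplit o i rest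
    match M.dstar p.1 with
    | none => none
    | some q => some (M.outDist q p.2)

/-- Probability of observing the output part of a trace suffix from a state. -/
noncomputable def traceProb (M : DetMDP Q I O) : Option Q → List (I × O) → ℝ≥0∞
  | none, _ => 0
  | some _, [] => 1
  | some q, (i, o) :: rest => M.outDist q i o * M.traceProb (M.step q i o) rest

end DetMDP

def traceInputAux {I O : Type*} : O → List (I × O) → I → TS I O
  | o, [], i => [(o, i)]
  | o, (i', o') :: rest, i => (o, i') :: traceInputAux o' rest i

/-- The test sequence `t · i`. -/
def traceInput {I O : Type*} (t : Trace I O) (i : I) : TS I O := traceInputAux t.1 t.2 i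

/-- The test sequence `t · e` for a continuation sequence `e`. -/
def traceCS {I O : Type*} (t : Trace I O) (e : CS I O) : TS I O := traceInput t e.1 ++ e.2

/-- The trace `t · i · o`. -/
def extT {I O : Type*} (t : Trace I O) (i : I) (o : O) : Trace I O := (t.1, t.2 ++ [(i, o)])

/-- The last output of a trace. -/
def lastOut {I O : Type*} (t : Trace I O) : O := ((t.2.getLast?).map Prod.snd).getD t.1

/-- Trace prefix relation. -/
def tracePrefix {I O : Type*} (t t' : Trace I O) : Prop := t.1 = t'.1 ∧ t.2 <+: t'.2

/-- `f(s)(o)` read off a partial semantics function (0 when undefined). -/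
def probOf {I O : Type*} (f : TS I O → Option (O → ℝ≥0∞)) (s : TS I O) (o : O) : ℝ≥0∞ :=
  ((f s).getD fun _ => 0) o

/-- M-equivalence of traces. -/
def MEq {I O : Type*} (f : TS I O → Option (O → ℝ≥0∞)) (t1 t2 : Trace I O) : Prop :=
  lastOut t1 = lastOut t2 ∧ ∀ e : CS I O, f (traceCS t1 e) = f (traceCS t2 e)

/-- Row of a trace in an observation table with column labels `E`. -/
noncomputable def rowOn {I O : Type*} (E : Set (CS I O)) (f : TS I O → Option (O → ℝ≥0∞)) (t : Trace I O) :
    CS I O → Option (O → ℝ≥0∞) :=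
  fun e => if e ∈ E then f (traceCS t e) else none

/-- Row equivalence `eqRow_E`. -/
def eqRow {I O : Type*} (E : Set (CS I O)) (f : TS I O → Option (O → ℝ≥0∞))
    (t1 t2 : Trace I O) : Prop :=
  lastOut t1 = lastOut t2 ∧ rowOn E f t1 = rowOn E f t2

/-- Membership in `Lt(S)`: observable one-step extensions of short traces. -/
def inLt {I O : Type*} (f : TS I O → Option (O → ℝ≥0∞)) (S : Set (Trace I O))
    (t : Trace I O) : Prop :=
  ∃ s ∈ S, ∃ i o, t = extT s i o ∧ 0 < probOf f (traceInput s i) o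

/-- Closedness of an observation table. -/
def ClosedTable {I O : Type*} (E : Set (CS I O)) (f : TS I O → Option (O → ℝ≥0∞))
    (S : Set (Trace I O)) : Prop :=
  ∀ l, inLt f S l → ∃ s ∈ S, eqRow E f l s

/-- Consistency of an observation table. -/
def ConsistentTable {I O : Type*} (E : Set (CS I O)) (f : TS I O → Option (O → ℝ≥0∞))
    (S : Set (Trace I O)) : Prop :=
  ∀ s1 ∈ S, ∀ s2 ∈ S, eqRow E f s1 s2 → ∀ i o,
    (probOf f (traceInput s1 i) o = 0 ∧ probOf f (traceInput s2 i) o = 0) ∨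
      eqRow E f (extT s1 i o) (extT s2 i o)

/-- The hypothesis state `⟨last(s), row(s)⟩` associated with a trace. -/
noncomputable def stateOf {I O : Type*} (E : Set (CS I O)) (f : TS I O → Option (O → ℝ≥0∞))
    (t : Trace I O) : O × (CS I O → Option (O → ℝ≥0∞)) :=
  (lastOut t, rowOn E f t)

/-- Auxiliary: continuation trace-part and final input. -/
def csTracePart {I O : Type*} : I → List (O × I) → List (I × O) × I
  | i, [] => ([], i)
  | i, (o, i') :: rest => let p := csTracePart i' rest; ((i, o) :: p.1, p.2)

lemma tsSplit_cs {I O : Type*} : ∀ (e2 : List (O × I)) (o : O) (i : I),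
    tsSplit o i e2 = ((o, (csTracePart i e2).1), (csTracePart i e2).2)
  | [], o, i => rfl
  | (o', i') :: rest, o, i => by
    simp [tsSplit, csTracePart, tsSplit_cs rest o' i']

lemma tsSplit_aux {I O : Type*} : ∀ (l : List (I × O)) (o : O) (i : I) (e2 : List (O × I)),
    ∃ a b rest, traceInputAux o l i ++ e2 = (a, b) :: rest ∧
      tsSplit a b rest = ((o, l ++ (csTracePart i e2).1), (csTracePart i e2).2)
  | [], o, i, e2 => ⟨o, i, e2, rfl, tsSplit_cs e2 o i⟩
  | (i₀, o₀) :: l', o, i, e2 => by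
    obtain ⟨a', b', rest', h1, h2⟩ := tsSplit_aux l' o₀ i e2
    refine ⟨o, i₀, traceInputAux o₀ l' i ++ e2, rfl, ?_⟩
    rw [h1]
    simp [tsSplit, h2]

namespace DetMDP

variable {Q I O : Type*}

lemma run_append (M : DetMDP Q I O) : ∀ (l1 l2 : List (I × O)) (oq : Option Q),
    M.run oq (l1 ++ l2) = M.run (M.run oq l1) l2
  | [], l2, oq => by cases oq <;> rfl
  | (i, o) :: rest, l2, some q => by
    simp only [List.cons_append, run]
    exact M.run_append rest l2 (M.step q i o)
  | (i, o) :: rest, l2, none => by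
    simp only [List.cons_append, run]
    induction l2 with
    | nil => rfl
    | cons hd tl ih => cases hd; rfl

/-- Semantics of a continuation run from an (optional) state. -/
noncomputable def semExt (M : DetMDP Q I O) (oq : Option Q) (e : CS I O) :
    Option (O → ℝ≥0∞) :=
  match M.run oq (csTracePart e.1 e.2).1 with
  | none => none
  | some q => some (M.outDist q (csTracePart e.1 e.2).2)

lemma sem_traceCS (M : DetMDP Q I O) (t : Trace I O) (e : CS I O) :
    M.sem (traceCS t e) = M.semExt (M.dstar t) e := by
  obtain ⟨o, l⟩ := t
  obtain ⟨i, e2⟩ := e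
  obtain ⟨a, b, rest, h1, h2⟩ := tsSplit_aux l o i e2
  have : traceCS (o, l) (i, e2) = (a, b) :: rest := h1
  rw [this]
  have hd : M.dstar (tsSplit a b rest).1 = M.run (M.dstar (o, l)) (csTracePart i e2).1 := by
    rw [h2]
    simp only [dstar]
    by_cases h : M.lab M.q0 = o
    · simp [h, M.run_append]
    · simp only [h, if_false]
      induction (csTracePart i e2).1 with
      | nil => rfl
      | cons hd tl ih => cases hd; rfl
  show (match M.dstar (tsSplit a b rest).1 with
    | none => none
    | some q => some (M.outDist q (tsSplit a b rest).2)) = _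
  rw [hd, h2]
  rfl

end DetMDP

/-- The M-equivalence relation on traces has finite index when `M` is
the semantics of a finite-state deterministic labelled MDP over finite alphabets. -/
theorem mequiv_finite_index {Q I O : Type*} [Finite Q] [Finite I] [Finite O]
    (M : DetMDP Q I O) :
    ∃ (n : ℕ) (g : Trace I O → Fin n), ∀ t1 t2, g t1 = g t2 ↔ MEq M.sem t1 t2 := by
  classical
  let r : Option Q → Option Q → Prop := fun q1 q2 => ∀ e : CS I O, M.semExt q1 e = M.semExt q2 e
  let s : Setoid (Option Q) := ⟨r, fun _ _ => rfl, fun h e => (h e).symm, fun h1 h2 e => (h1 e).trans (h2 e)⟩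
  have hoq : Finite (Option Q) := by have := Fintype.ofFinite Q; exact Finite.of_fintype _
  have hq : Finite (Quotient s) := Quotient.finite s
  have : Finite (O × Quotient s) := Finite.instProd
  obtain ⟨n, ⟨eqv⟩⟩ := Finite.exists_equiv_fin (O × Quotient s)
  refine ⟨n, fun t => eqv (lastOut t, Quotient.mk s (M.dstar t)), fun t1 t2 => ?_⟩
  rw [eqv.apply_eq_iff_eq, Prod.ext_iff]
  constructor
  · rintro ⟨h1, h2⟩
    refine ⟨h1, fun e => ?_⟩
    rw [M.sem_traceCS, M.sem_traceCS]
    exact Quotient.exact h2 e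
  · rintro ⟨h1, h2⟩
    refine ⟨h1, Quotient.sound fun e => ?_⟩
    have := h2 e
    rwa [M.sem_traceCS, M.sem_traceCS] at this
end

section
/- If s is a counterexample to output-distribution equivalence of a hypothesis MDP H and the SUL MDP M such that M(s) = ⊥ (s is not observable on M), then there exists a prefix s' of s that is also a counterexample (H(s') ≠ M(s')) with M(s') ≠ ⊥. -/
open scoped ENNReal Classical
open MeasureTheory

/-!
Extending a test sequence `s` by `(o, i)` is observable exactly when `s` is observable and its
output distribution gives `o` positive mass (for `s = []` this is the check of the initial
label). So if `H(s · (o, i))` is defined but `M(s · (o, i))` is not, then either `M(s)` is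
undefined while `H(s)` is not, and we recurse on `s`, or `M(s)` is defined and differs from
`H(s)` at `o`.
-/

theorem tsSplit_append_singleton {I O : Type*} (o : O) (i : I) (rest : TS I O) (o' : O) (i' : I) :
    tsSplit o i (rest ++ [(o', i')]) =
      (extT (tsSplit o i rest).1 (tsSplit o i rest).2 o', i') := by
  induction rest generalizing o i with
  | nil => rfl
  | cons x rest ih =>
    obtain ⟨o₂, i₂⟩ := x
    simp [tsSplit, ih, extT]

namespace DetMDP

variable {Q I O : Type*} (M : DetMDP Q I O)

theorem step_ne_none_iff {q : Q} {i : I} {o : O} :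
    M.step q i o ≠ none ↔ ∃ q', 0 < M.trans q i q' ∧ M.lab q' = o := by
  unfold step
  split_ifs with h <;> simp [h]

theorem step_ne_none_iff_outDist_pos {q : Q} {i : I} {o : O} :
    M.step q i o ≠ none ↔ 0 < M.outDist q i o := by
  rw [step_ne_none_iff, outDist, pos_iff_ne_zero, Ne, ENNReal.tsum_eq_zero]
  push Not
  refine exists_congr fun q' => ?_
  by_cases h : M.lab q' = o <;> simp [h, pos_iff_ne_zero]

theorem run_append_singleton (oq : Option Q) (l : List (I × O)) (i : I) (o : O) :
    M.run oq (l ++ [(i, o)]) = (M.run oq l).bind fun q => M.step q i o := by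
  induction l generalizing oq with
  | nil => cases oq <;> rfl
  | cons x l ih =>
    obtain ⟨i', o'⟩ := x
    cases oq with
    | none => rfl
    | some q => exact ih _

theorem dstar_extT (t : Trace I O) (i : I) (o : O) :
    M.dstar (extT t i o) = (M.dstar t).bind fun q => M.step q i o := by
  unfold dstar extT
  split_ifs <;> simp [run_append_singleton]

theorem sem_cons (o : O) (i : I) (rest : TS I O) :
    M.sem ((o, i) :: rest) =
      (M.dstar (tsSplit o i rest).1).map fun q => M.outDist q (tsSplit o i rest).2 := by
  simp only [sem]
  split <;> simp_all

theorem sem_append_singleton_ne_none_iff (s : TS I O) (o : O) (i : I) :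
    M.sem (s ++ [(o, i)]) ≠ none ↔ ∃ d, M.sem s = some d ∧ 0 < d o := by
  cases s with
  | nil =>
    simp only [List.nil_append, sem, tsSplit, dstar, run]
    split_ifs <;> simp_all
  | cons x tl =>
    obtain ⟨o₀, i₀⟩ := x
    rw [List.cons_append, sem_cons, sem_cons, tsSplit_append_singleton, dstar_extT]
    cases M.dstar (tsSplit o₀ i₀ tl).1 <;> simp [step_ne_none_iff_outDist_pos]

end DetMDP

/-- If `s` is a counterexample to output-distribution equivalence of a
hypothesis `H` and the SUL `M` with `M(s) = ⊥`, then some prefix `s'` of `s` is a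
counterexample with `M(s') ≠ ⊥`. -/
theorem observable_counterexample_prefix {Q1 Q2 I O : Type*}
    (H : DetMDP Q1 I O) (M : DetMDP Q2 I O) (s : TS I O)
    (hne : H.sem s ≠ M.sem s) (hbot : M.sem s = none) :
    ∃ s' : TS I O, s' <+: s ∧ H.sem s' ≠ M.sem s' ∧ M.sem s' ≠ none := by
  induction s using List.reverseRecOn with
  | nil => simp [DetMDP.sem] at hbot
  | append_singleton u x ih =>
    obtain ⟨o, i⟩ := x
    obtain ⟨dH, hHu, hdH⟩ :=
      (H.sem_append_singleton_ne_none_iff u o i).1 fun h => hne (h.trans hbot.symm)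
    have hMu : ¬∃ dM, M.sem u = some dM ∧ 0 < dM o :=
      fun h => (M.sem_append_singleton_ne_none_iff u o i).2 h hbot
    cases hM : M.sem u with
    | none =>
      obtain ⟨s', hpre, hs'⟩ := ih (by simp [hHu, hM]) hM
      exact ⟨s', hpre.trans (List.prefix_append _ _), hs'⟩
    | some dM =>
      refine ⟨u, List.prefix_append _ _, ?_, hM ▸ Option.some_ne_none dM⟩
      rw [hHu, hM, Ne, Option.some_inj]
      rintro rfl
      exact hMu ⟨dH, hM, hdH⟩
end

section
/- If in the sampling-based observation table, row-compatibility coincides with exact row-equality (compatible_E(s,s') ⟺ eqRow_E(s,s')) and the rank function imposes a lexicographic ordering on traces, then the set R of representatives computed by the greedy compatibility-class algorithm is prefix-closed. -/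
open scoped ENNReal Classical
open MeasureTheory

/-- If row-compatibility coincides with exact row-equality and the
rank function imposes a lexicographic ordering on traces, then the set `R` of
representatives computed by the greedy compatibility-class algorithm is
prefix-closed. -/
theorem representatives_prefixClosed {I O : Type*}
    (f : TS I O → Option (O → ℝ≥0∞)) (E : Set (CS I O))
    (S R : Set (Trace I O)) (comp : Trace I O → Trace I O → Prop)
    (rep : Trace I O → Trace I O) (rank : Trace I O → ℕ)
    -- compatibility coincides with exact row equality
    (hco : ∀ t1 t2, comp t1 t2 ↔ eqRow E f t1 t2)
    (hE : ∀ i : I, ((i, []) : CS I O) ∈ E)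
    -- S is prefix-closed and its rows are observable
    (hSpc : ∀ t ∈ S, ∀ t', tracePrefix t' t → t' ∈ S)
    (hSobs : ∀ s ∈ S, ∀ (i : I) (o : O), extT s i o ∈ S → 0 < probOf f (traceInput s i) o)
    -- properties of the greedy partition: representatives, maximal rank, pairwise incompatible
    (hRS : R ⊆ S)
    (hrepR : ∀ s ∈ S, rep s ∈ R)
    (hrepc : ∀ s ∈ S, comp s (rep s))
    (hmax : ∀ r ∈ R, ∀ s : Trace I O, (s ∈ S ∨ inLt f S s) → comp s r → rank s ≤ rank r)
    (hpairwise : ∀ r ∈ R, ∀ r' ∈ R, r ≠ r' → ¬ comp r r')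
    -- closedness and consistency: compatibility with the representative extends
    (hconsExt : ∀ s ∈ S, ∀ (i : I) (o : O), comp (extT s i o) (extT (rep s) i o))
    -- rank is a lexicographic ordering on traces
    (hlex : ∀ (t1 t2 : Trace I O) (i : I) (o : O),
      rank t1 < rank t2 → rank (extT t1 i o) < rank (extT t2 i o))
    (hinj : Function.Injective rank) :
    ∀ r ∈ R, ∀ t, tracePrefix t r → t ∈ R := by
  -- key step: R is closed under immediate prefixes
  have key : ∀ (t : Trace I O) (i : I) (o : O), extT t i o ∈ R → t ∈ R := by
    intro t i o hR
    have hSr : extT t i o ∈ S := hRS hR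
    have htS : t ∈ S := hSpc _ hSr t ⟨rfl, ⟨[(i, o)], rfl⟩⟩
    have hrepc' := hrepc t htS
    have heq : eqRow E f t (rep t) := (hco _ _).mp hrepc'
    -- rank t ≤ rank (rep t)
    have hle : rank t ≤ rank (rep t) :=
      hmax _ (hrepR t htS) t (Or.inl htS) hrepc'
    by_cases hte : t = rep t
    · rw [hte]; exact hrepR t htS
    · exfalso
      have hlt : rank t < rank (rep t) :=
        lt_of_le_of_ne hle (fun h => hte (hinj h))
      have hlt2 : rank (extT t i o) < rank (extT (rep t) i o) := hlex _ _ _ _ hlt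
      -- positive probability transfers along equal rows
      have hpos : 0 < probOf f (traceInput t i) o := hSobs t htS i o hSr
      have hfeq : f (traceCS t (i, ([] : List (O × I)))) =
          f (traceCS (rep t) (i, ([] : List (O × I)))) := by
        have := congrFun heq.2 (i, ([] : List (O × I)))
        simpa [rowOn, hE i] using this
      have hcs : ∀ t' : Trace I O, traceCS t' (i, ([] : List (O × I))) = traceInput t' i := by
        intro t'; simp [traceCS]
      rw [hcs, hcs] at hfeq
      have hpos' : 0 < probOf f (traceInput (rep t) i) o := by
        unfold probOf; rw [← hfeq]; exact hpos
      have hinLt : inLt f S (extT (rep t) i o) :=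
        ⟨rep t, hRS (hrepR t htS), i, o, rfl, hpos'⟩
      have hcomp := hconsExt t htS i o
      have hcomp' : comp (extT (rep t) i o) (extT t i o) := by
        have h := (hco _ _).mp hcomp
        exact (hco _ _).mpr ⟨h.1.symm, h.2.symm⟩
      have := hmax _ hR _ (Or.inr hinLt) hcomp'
      omega
  intro r hr t ht
  obtain ⟨h1, l, h2⟩ := ht
  induction l using List.reverseRecOn generalizing r with
  | nil =>
    have : t = r := by
      cases t; cases r; simp_all
    rwa [this]
  | append_singleton l p ih =>
    obtain ⟨i, o⟩ := p
    have hr' : r = extT (t.1, t.2 ++ l) i o := by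
      cases r; simp_all [extT]
    have hmem : (t.1, t.2 ++ l) ∈ R := key _ i o (hr' ▸ hr)
    exact ih _ hmem rfl rfl
end
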